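/- arXiv:1211.4293 — 2 statements merged into one kernel-verified Lean document; each statement's English description precedes it below -/
import Mathlib

section
/- Let Φ satisfy the RIP of order N with constant δ_N, let x ∈ ℝⁿ be supported on T, and let T^k ⊆ {1,…,n} be any index set. Let r = y - P_{T^k} y where y = Φx and P_{T^k} is the orthogonal projection onto span(Φ_{T^k}). If |T \ T^k| ≤ N, then ‖r‖₂² ≤ (1 + δ_N)·‖x_{T\T^k}‖₂². -/
/-!
`P_{T^k} y` is the point of `span Φ_{T^k}` closest to `y`, and `Φ x_{T^k}` lies in that span, so
`‖r‖ ≤ ‖y - Φ x_{T^k}‖ = ‖Φ x_{T \ T^k}‖`. The vector `x_{T \ T^k}` is `|T \ T^k|`-sparse, hence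
the RIP bound applies to it.
-/

open Matrix

namespace Submodule

variable {𝕜 E : Type*} [RCLike 𝕜] [NormedAddCommGroup E] [InnerProductSpace 𝕜 E]

theorem norm_sub_orthogonalProjectionOnto_le (K : Submodule 𝕜 E) [K.HasOrthogonalProjection]
    (v : E) {w : E} (hw : w ∈ K) : ‖v - K.orthogonalProjectionOnto v‖ ≤ ‖v - w‖ := by
  rw [← starProjection_apply, starProjection_minimal]
  exact ciInf_le ⟨0, by rintro _ ⟨u, rfl⟩; positivity⟩ (⟨w, hw⟩ : K)

end Submodule

namespace Matrix

variable {𝕜 : Type*} [RCLike 𝕜] {m n : Type*} [Fintype n]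

theorem toLp_mulVec_mem_span_cols (A : Matrix m n 𝕜) {s : Finset n} {z : n → 𝕜}
    (hz : ∀ i ∉ s, z i = 0) :
    WithLp.toLp 2 (A *ᵥ z) ∈
      Submodule.span 𝕜 {v : EuclideanSpace 𝕜 m | ∃ i ∈ s, v = fun j => A j i} := by
  have hsum : A *ᵥ z = ∑ i ∈ s, z i • fun j => A j i := by
    rw [mulVec_eq_sum, ← Finset.sum_subset s.subset_univ fun i _ hi => by simp [hz i hi]]
    simp only [op_smul_eq_smul]
    rfl
  rw [hsum, WithLp.toLp_sum]
  refine Submodule.sum_mem _ fun i hi => ?_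
  rw [WithLp.toLp_smul]
  exact Submodule.smul_mem _ _ (Submodule.subset_span ⟨i, hi, rfl⟩)

end Matrix

theorem Finset.card_filter_ne_zero_le {ι M : Type*} [Fintype ι] [Zero M] [DecidableEq M]
    {s : Finset ι} {z : ι → M} (hz : ∀ i ∉ s, z i = 0) :
    (Finset.univ.filter fun i => z i ≠ 0).card ≤ s.card :=
  Finset.card_le_card fun i hi => by
    by_contra h
    exact (Finset.mem_filter.1 hi).2 (hz i h)

/-- If `Φ` satisfies the upper RIP inequality of order `N` with constant `δ`,
`x` is supported on `T`, `y = Φx`, `r = y - P_{T^k} y`, and `|T \ T^k| ≤ N`,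
then `‖r‖² ≤ (1 + δ) ‖x_{T \ T^k}‖²`. -/
theorem residual_le_rip {m n : ℕ} (Φ : Matrix (Fin m) (Fin n) ℝ) (N : ℕ) (δ : ℝ)
    (hRIP : ∀ z : Fin n → ℝ, (Finset.univ.filter fun i => z i ≠ 0).card ≤ N →
      ∑ j, (Φ.mulVec z j) ^ 2 ≤ (1 + δ) * ∑ i, (z i) ^ 2)
    (x : Fin n → ℝ) (T : Finset (Fin n)) (hT : ∀ i, x i ≠ 0 → i ∈ T)
    (Tk : Finset (Fin n)) (hcard : (T \ Tk).card ≤ N)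
    (y r : EuclideanSpace ℝ (Fin m)) (hy : ∀ j, y j = Φ.mulVec x j)
    (hr : r = y - (Submodule.orthogonalProjectionOnto
      (Submodule.span ℝ {v : EuclideanSpace ℝ (Fin m) | ∃ i ∈ Tk, v = fun j => Φ j i}) y :
      EuclideanSpace ℝ (Fin m))) :
    ‖r‖ ^ 2 ≤ (1 + δ) * ∑ i ∈ T \ Tk, (x i) ^ 2 := by
  set z := (T \ Tk).piecewise x 0
  have hz : ∀ i ∉ T \ Tk, z i = 0 := fun i hi => Finset.piecewise_eq_of_notMem _ _ _ hi
  have hxz : ∀ i ∉ Tk, (x - z) i = 0 := by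
    intro i hi
    by_cases hiT : i ∈ T
    · simp [z, Finset.piecewise_eq_of_mem _ _ _ (Finset.mem_sdiff.2 ⟨hiT, hi⟩)]
    · simp [hz i (fun h => hiT (Finset.mem_sdiff.1 h).1), not_imp_comm.1 (hT i) hiT]
  have hy_toLp : y = WithLp.toLp 2 (Φ *ᵥ x) := by ext j; exact hy j
  have hresidual : y - WithLp.toLp 2 (Φ *ᵥ (x - z)) = WithLp.toLp 2 (Φ *ᵥ z) := by
    rw [hy_toLp, mulVec_sub, WithLp.toLp_sub, sub_sub_cancel]
  calc ‖r‖ ^ 2 ≤ ‖y - WithLp.toLp 2 (Φ *ᵥ (x - z))‖ ^ 2 := by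
        rw [hr]
        gcongr
        exact Submodule.norm_sub_orthogonalProjectionOnto_le _ y
          (Φ.toLp_mulVec_mem_span_cols hxz)
    _ = ∑ j, (Φ *ᵥ z) j ^ 2 := by rw [hresidual, EuclideanSpace.real_norm_sq_eq]
    _ ≤ (1 + δ) * ∑ i, z i ^ 2 := hRIP z ((Finset.card_filter_ne_zero_le hz).trans hcard)
    _ = (1 + δ) * ∑ i ∈ T \ Tk, x i ^ 2 := by
        rw [← Finset.sum_subset (T \ Tk).subset_univ fun i _ hi => by simp [hz i hi]]
        exact congrArg _ (Finset.sum_congr rfl fun i hi => by simp [z, hi])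
end

section
/- Let Φ be an m×n matrix whose columns φ_i satisfy ‖φ_i‖₂² ≤ 1 + δ₁ (RIP of order 1). Let T^l ⊆ T^{l+1} be index sets with T^{l+1} = T^l ∪ {t} where t = argmax_i |⟨r^l, φ_i⟩|, and let r^l = y - P_{T^l} y and r^{l+1} = y - P_{T^{l+1}} y. Then ‖r^l‖₂² - ‖r^{l+1}‖₂² ≥ ‖Φᵀ r^l‖_∞² / (1 + δ₁). -/
/-!
Adding the column `φₜ` to the support lets the new projection compete with the candidate
`P_{Tˡ} y + c φₜ`; with the optimal `c = ⟨φₜ, rˡ⟩ / ‖φₜ‖²` its residual has squared norm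
`‖rˡ‖² - ⟨φₜ, rˡ⟩² / ‖φₜ‖²`. Since `t` attains `‖Φᵀ rˡ‖_∞` and `‖φₜ‖² ≤ 1 + δ₁`, this gives the bound.
-/

open scoped RealInnerProductSpace

section ResidualDecrease

variable {E : Type*} [NormedAddCommGroup E] [InnerProductSpace ℝ E]

theorem Submodule.norm_sub_starProjection_le {K : Submodule ℝ E} [K.HasOrthogonalProjection]
    (y : E) {w : E} (hw : w ∈ K) : ‖y - K.starProjection y‖ ≤ ‖y - w‖ := by
  rw [Submodule.starProjection_minimal]
  exact ciInf_le ⟨0, by rintro _ ⟨x, rfl⟩; positivity⟩ (⟨w, hw⟩ : K)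

theorem norm_sub_inner_div_smul_sq (r v : E) :
    ‖r - (⟪v, r⟫ / ‖v‖ ^ 2) • v‖ ^ 2 = ‖r‖ ^ 2 - ⟪v, r⟫ ^ 2 / ‖v‖ ^ 2 := by
  rcases eq_or_ne v 0 with rfl | hv
  · simp
  · have : ‖v‖ ≠ 0 := norm_ne_zero_iff.2 hv
    rw [norm_sub_sq_real, real_inner_smul_right, norm_smul, mul_pow, Real.norm_eq_abs, sq_abs,
      real_inner_comm]
    field_simp
    ring

theorem sq_inner_div_sq_norm_le_residual_sub {K K' : Submodule ℝ E} [K.HasOrthogonalProjection]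
    [K'.HasOrthogonalProjection] (hKK' : K ≤ K') {v : E} (hv : v ∈ K') (y : E) :
    ⟪v, y - K.starProjection y⟫ ^ 2 / ‖v‖ ^ 2 ≤
      ‖y - K.starProjection y‖ ^ 2 - ‖y - K'.starProjection y‖ ^ 2 := by
  have hw : K.starProjection y + (⟪v, y - K.starProjection y⟫ / ‖v‖ ^ 2) • v ∈ K' :=
    K'.add_mem (hKK' (K.starProjection_apply_mem y)) (K'.smul_mem _ hv)
  have hsq := pow_le_pow_left₀ (norm_nonneg _) (K'.norm_sub_starProjection_le y hw) 2
  rw [← sub_sub, norm_sub_inner_div_smul_sq] at hsq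
  linarith

theorem sq_inner_div_le_residual_sub {K K' : Submodule ℝ E} [K.HasOrthogonalProjection]
    [K'.HasOrthogonalProjection] (hKK' : K ≤ K') {v : E} (hv : v ∈ K') {C : ℝ}
    (hC : ‖v‖ ^ 2 ≤ C) (y : E) :
    ⟪v, y - K.starProjection y⟫ ^ 2 / C ≤
      ‖y - K.starProjection y‖ ^ 2 - ‖y - K'.starProjection y‖ ^ 2 := by
  rcases eq_or_ne v 0 with rfl | hv0
  · simpa using sq_inner_div_sq_norm_le_residual_sub hKK' K'.zero_mem y
  · calc ⟪v, y - K.starProjection y⟫ ^ 2 / C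
        ≤ ⟪v, y - K.starProjection y⟫ ^ 2 / ‖v‖ ^ 2 :=
          div_le_div_of_nonneg_left (sq_nonneg _) (by positivity) hC
      _ ≤ _ := sq_inner_div_sq_norm_le_residual_sub hKK' hv y

end ResidualDecrease

section EuclideanCoordinates

variable {ι : Type*} [Fintype ι]

theorem EuclideanSpace.inner_toLp_eq_sum (f : ι → ℝ) (x : EuclideanSpace ℝ ι) :
    ⟪WithLp.toLp 2 f, x⟫ = ∑ j, f j * x j := by
  simp [PiLp.inner_apply, mul_comm]

theorem EuclideanSpace.norm_toLp_sq (f : ι → ℝ) :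
    ‖(WithLp.toLp 2 f : EuclideanSpace ℝ ι)‖ ^ 2 = ∑ j, f j ^ 2 := by
  simp [EuclideanSpace.norm_sq_eq]

end EuclideanCoordinates

theorem omp_residual_decrease_general {m n : ℕ} (Φ : Matrix (Fin m) (Fin n) ℝ) (δ₁ : ℝ)
    (hcolup : ∀ i : Fin n, ∑ j, (Φ j i) ^ 2 ≤ 1 + δ₁)
    (hne : (Finset.univ : Finset (Fin n)).Nonempty)
    (Tl : Finset (Fin n)) (t : Fin n)
    (y rl rl1 : EuclideanSpace ℝ (Fin m))
    (hrl : rl = y - (Submodule.orthogonalProjectionOnto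
      (Submodule.span ℝ {v : EuclideanSpace ℝ (Fin m) | ∃ i ∈ Tl, v = WithLp.toLp 2 (fun j => Φ j i)}) y :
      EuclideanSpace ℝ (Fin m)))
    (hrl1 : rl1 = y - (Submodule.orthogonalProjectionOnto
      (Submodule.span ℝ {v : EuclideanSpace ℝ (Fin m) | ∃ i ∈ insert t Tl, v = WithLp.toLp 2 (fun j => Φ j i)}) y :
      EuclideanSpace ℝ (Fin m)))
    (hmax : ∀ i : Fin n, |∑ j, Φ j i * rl j| ≤ |∑ j, Φ j t * rl j|) :
    ‖rl‖ ^ 2 - ‖rl1‖ ^ 2 ≥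
      (Finset.univ.sup' hne fun i => |∑ j, Φ j i * rl j|) ^ 2 / (1 + δ₁) := by
  set S := {v : EuclideanSpace ℝ (Fin m) | ∃ i ∈ Tl, v = WithLp.toLp 2 (fun j => Φ j i)}
  set S' := {v : EuclideanSpace ℝ (Fin m) | ∃ i ∈ insert t Tl, v = WithLp.toLp 2 (fun j => Φ j i)}
  have hmono : Submodule.span ℝ S ≤ Submodule.span ℝ S' :=
    Submodule.span_mono fun v ⟨i, hi, hv⟩ => ⟨i, Finset.mem_insert_of_mem hi, hv⟩
  set φt : EuclideanSpace ℝ (Fin m) := WithLp.toLp 2 (fun j => Φ j t)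
  have hφt : φt ∈ Submodule.span ℝ S' := Submodule.subset_span ⟨t, Finset.mem_insert_self t Tl, rfl⟩
  have hnorm : ‖φt‖ ^ 2 ≤ 1 + δ₁ := (EuclideanSpace.norm_toLp_sq _).trans_le (hcolup t)
  have hdecrease := sq_inner_div_le_residual_sub hmono hφt hnorm y
  simp only [Submodule.starProjection_apply, ← hrl, ← hrl1, EuclideanSpace.inner_toLp_eq_sum,
    φt] at hdecrease
  have hsup_le : (Finset.univ.sup' hne fun i => |∑ j, Φ j i * rl j|) ≤ |∑ j, Φ j t * rl j| :=
    Finset.sup'_le _ _ fun i _ => hmax i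
  have hsup_nonneg : 0 ≤ Finset.univ.sup' hne fun i => |∑ j, Φ j i * rl j| :=
    Finset.le_sup'_of_le _ (Finset.mem_univ t) (abs_nonneg _)
  calc (Finset.univ.sup' hne fun i => |∑ j, Φ j i * rl j|) ^ 2 / (1 + δ₁)
      ≤ (∑ j, Φ j t * rl j) ^ 2 / (1 + δ₁) :=
        div_le_div_of_nonneg_right ((pow_le_pow_left₀ hsup_nonneg hsup_le 2).trans_eq (sq_abs _))
          ((sq_nonneg _).trans hnorm)
    _ ≤ ‖rl‖ ^ 2 - ‖rl1‖ ^ 2 := hdecrease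

/-- One-step residual decrease of OMP: if `t` maximizes `|φᵢᵀ rˡ|` and every column
satisfies `‖φᵢ‖² ≤ 1 + δ₁`, then the residual power drops by at least
`‖Φᵀ rˡ‖_∞² / (1 + δ₁)`. -/
theorem omp_residual_decrease {m n : ℕ} (Φ : Matrix (Fin m) (Fin n) ℝ) (δ₁ : ℝ)
    (hδ : 0 ≤ δ₁)
    (hcolup : ∀ i : Fin n, ∑ j, (Φ j i) ^ 2 ≤ 1 + δ₁)
    (hcollow : ∀ i : Fin n, 1 - δ₁ ≤ ∑ j, (Φ j i) ^ 2) (hδ1 : δ₁ < 1)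
    (hne : (Finset.univ : Finset (Fin n)).Nonempty)
    (Tl : Finset (Fin n)) (t : Fin n)
    (y rl rl1 : EuclideanSpace ℝ (Fin m))
    (hrl : rl = y - (Submodule.orthogonalProjectionOnto
      (Submodule.span ℝ {v : EuclideanSpace ℝ (Fin m) | ∃ i ∈ Tl, v = WithLp.toLp 2 (fun j => Φ j i)}) y :
      EuclideanSpace ℝ (Fin m)))
    (hrl1 : rl1 = y - (Submodule.orthogonalProjectionOnto
      (Submodule.span ℝ {v : EuclideanSpace ℝ (Fin m) | ∃ i ∈ insert t Tl, v = WithLp.toLp 2 (fun j => Φ j i)}) y :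
      EuclideanSpace ℝ (Fin m)))
    (hmax : ∀ i : Fin n, |∑ j, Φ j i * rl j| ≤ |∑ j, Φ j t * rl j|) :
    ‖rl‖ ^ 2 - ‖rl1‖ ^ 2 ≥
      (Finset.univ.sup' hne fun i => |∑ j, Φ j i * rl j|) ^ 2 / (1 + δ₁) :=
  omp_residual_decrease_general Φ δ₁ hcolup hne Tl t y rl rl1 hrl hrl1 hmax
end
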